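/- arXiv:1912.13261 — 3 statements merged into one kernel-verified Lean document; each statement's English description precedes it below -/
import Mathlib

section
/- Let λ, μ be real with μ > 0 and λ + μ > 0 and κ₀ > 0, δ(x₁) = ε + κ₀x₁². Define ū₁⁽¹⁾ = (2x₂+δ)/(2δ), ũ₁⁽¹⁾ = ((x₂/δ)² − 1/4)·(2 − μ/(λ+2μ))·(κ₀/3)·x₂, ũ₁⁽²⁾ = ((x₂/δ)² − 1/4)·(1 − μ/(λ+2μ))·κ₀·x₁. Then the singular parts cancel: (λ+2μ)(∂_{x₁x₁}ū₁⁽¹⁾ − R₁₁) + μ ∂_{x₂x₂}ũ₁⁽¹⁾ + (λ+μ)(∂_{x₁x₂}ũ₁⁽²⁾ − R₁₂) = 0, where R₁₁ = 8κ₀² x₁²x₂/δ³ and R₁₂ = −8κ₀²(λ+μ)/(λ+2μ) · x₁²x₂/δ³. -/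
open Real

/-!
With `δ = ε + κ x₁²`, each second derivative is computed explicitly. After subtracting
`R₁₁` and `R₁₂`, all three terms are multiples of `κ x₂ / δ²`, with coefficients
`-2(λ+2μ)`, `2μ(2λ+3μ)/(λ+2μ)` and `2(λ+μ)²/(λ+2μ)`; these sum to zero because
`(λ+2μ)² = μ(2λ+3μ) + (λ+μ)²`.
-/

theorem hasDerivAt_neckWidth (ε κ a : ℝ) :
    HasDerivAt (fun a => ε + κ * a ^ 2) (2 * κ * a) a := by
  refine (((hasDerivAt_pow 2 a).const_mul κ).const_add ε).congr_deriv ?_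
  push_cast
  ring

section NeckWidth

variable {ε κ : ℝ}

theorem deriv_ratio_neckWidth (hδ : ∀ a, ε + κ * a ^ 2 ≠ 0) (y : ℝ) :
    (deriv fun a => (2 * y + (ε + κ * a ^ 2)) / (2 * (ε + κ * a ^ 2)))
      = fun a => -(2 * κ * y) * a / (ε + κ * a ^ 2) ^ 2 := by
  funext a
  have h := ((hasDerivAt_neckWidth ε κ a).const_add (2 * y)).fun_div
    ((hasDerivAt_neckWidth ε κ a).const_mul 2) (mul_ne_zero two_ne_zero (hδ a))
  rw [h.deriv]
  field_simp [hδ a]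
  ring

theorem deriv_deriv_ratio_neckWidth (hδ : ∀ a, ε + κ * a ^ 2 ≠ 0) (x y : ℝ) :
    deriv (fun a => deriv (fun a' => (2 * y + (ε + κ * a' ^ 2)) / (2 * (ε + κ * a' ^ 2))) a) x
      = -(2 * κ * y) / (ε + κ * x ^ 2) ^ 2 + 8 * κ ^ 2 * x ^ 2 * y / (ε + κ * x ^ 2) ^ 3 := by
  have h := ((hasDerivAt_id' x).const_mul (-(2 * κ * y))).fun_div
    ((hasDerivAt_neckWidth ε κ x).fun_pow 2) (pow_ne_zero 2 (hδ x))
  rw [deriv_ratio_neckWidth hδ, h.deriv]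
  field_simp [hδ x]
  ring

theorem deriv_deriv_mixed_neckWidth {x : ℝ} (hδ : ε + κ * x ^ 2 ≠ 0) (c y : ℝ) :
    deriv (fun b => deriv (fun a => ((b / (ε + κ * a ^ 2)) ^ 2 - 1/4) * c * a) x) y
      = c * (2 * y / (ε + κ * x ^ 2) ^ 2 - 8 * κ * x ^ 2 * y / (ε + κ * x ^ 2) ^ 3) := by
  have inner : (fun b => deriv (fun a => ((b / (ε + κ * a ^ 2)) ^ 2 - 1/4) * c * a) x)
      = fun b => c * (b ^ 2 / (ε + κ * x ^ 2) ^ 2 - 1/4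
          - 4 * κ * x ^ 2 * b ^ 2 / (ε + κ * x ^ 2) ^ 3) := by
    funext b
    have h := (((((hasDerivAt_const x b).fun_div (hasDerivAt_neckWidth ε κ x) hδ).fun_pow 2).sub_const
      (1/4)).mul_const c).fun_mul (hasDerivAt_id' x)
    rw [h.deriv]
    simp only [Nat.cast_ofNat, pow_one, Nat.add_one_sub_one]
    field_simp
    ring
  have h := (((((hasDerivAt_pow 2 y).div_const ((ε + κ * x ^ 2) ^ 2)).sub_const (1/4)).fun_sub
    (((hasDerivAt_pow 2 y).const_mul (4 * κ * x ^ 2)).div_const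
      ((ε + κ * x ^ 2) ^ 3))).const_mul c)
  rw [inner, h.deriv]
  field_simp
  ring

end NeckWidth

theorem deriv_deriv_sq_div_sub_mul (c d y : ℝ) :
    deriv (fun b => deriv (fun b' => ((b' / d) ^ 2 - 1/4) * c * b') b) y = 6 * c * y / d ^ 2 := by
  have cubic : (fun b' => ((b' / d) ^ 2 - 1/4) * c * b') = fun b => c / d ^ 2 * b ^ 3 - c / 4 * b := by
    funext b
    ring
  have inner : (deriv fun b => c / d ^ 2 * b ^ 3 - c / 4 * b)
      = fun b => c / d ^ 2 * (3 * b ^ 2) - c / 4 := by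
    funext b
    simpa using (((hasDerivAt_pow 3 b).const_mul (c / d ^ 2)).fun_sub
      ((hasDerivAt_id' b).const_mul (c / 4))).deriv
  have h := (((hasDerivAt_pow 2 y).const_mul 3).const_mul (c / d ^ 2)).sub_const (c / 4)
  rw [cubic, inner, h.deriv]
  ring

theorem stmt_6 (ε κ l μ : ℝ) (hε : 0 < ε) (hκ : 0 < κ) (hμ : 0 < μ)
    (hlμ : 0 < l + μ) (x y : ℝ) :
    (l + 2 * μ) *
        ((deriv (fun a =>
            deriv (fun a' => (2 * y + (ε + κ * a' ^ 2)) / (2 * (ε + κ * a' ^ 2))) a) x) -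
          8 * κ ^ 2 * x ^ 2 * y / (ε + κ * x ^ 2) ^ 3) +
      μ *
        (deriv (fun b =>
          deriv (fun b' =>
            ((b' / (ε + κ * x ^ 2)) ^ 2 - 1/4) * (2 - μ / (l + 2 * μ)) * (κ / 3) * b') b) y) +
      (l + μ) *
        ((deriv (fun b =>
            deriv (fun a =>
              ((b / (ε + κ * a ^ 2)) ^ 2 - 1/4) * (1 - μ / (l + 2 * μ)) * κ * a) x) y) -
          (-(8 * κ ^ 2 * (l + μ) / (l + 2 * μ)) * x ^ 2 * y / (ε + κ * x ^ 2) ^ 3)) = 0 := by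
  have hδ : ∀ a, ε + κ * a ^ 2 ≠ 0 := fun a => by positivity
  have hl : l + 2 * μ ≠ 0 := by linarith
  simp only [mul_assoc _ (2 - μ / (l + 2 * μ)) (κ / 3), mul_assoc _ (1 - μ / (l + 2 * μ)) κ]
  rw [deriv_deriv_ratio_neckWidth hδ, deriv_deriv_sq_div_sub_mul,
    deriv_deriv_mixed_neckWidth (hδ x)]
  field_simp
  ring
end

section
/- Let m > 2, δ(x₁) = ε + κ₀|x₁|^m, and μ > 0, λ + μ > 0. For x₁ > 0, define ū₁⁽¹⁾ = (2x₂+δ)/(2δ), ũ₁⁽¹⁾ = ((x₂/δ)²−1/4)(2−μ/(λ+2μ))(κ₀/3)(m(m−1)/2)x₂x₁^{m−2}, ũ₁⁽²⁾ = ((x₂/δ)²−1/4)(1−μ/(λ+2μ))κ₀(m/2)x₁^{m−1}. Then (λ+2μ)∂_{x₂x₂}ũ₁⁽²⁾ + (λ+μ)∂_{x₂x₁}ū₁⁽¹⁾ = 0 pointwise for x₁ > 0, using ∂_{x₂x₂}ũ₁⁽²⁾ = mκ₀(λ+μ)/(λ+2μ)·x₁^{m−1}/δ² and ∂_{x₁x₂}ū₁⁽¹⁾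 = −mκ₀ x₁^{m−1}/δ². -/
open Real

theorem stmt_12 (m ε κ l μ : ℝ) (hm : 2 < m) (hε : 0 < ε) (hκ : 0 < κ)
    (hμ : 0 < μ) (hlμ : 0 < l + μ) (x y : ℝ) (hx : 0 < x) :
    (l + 2 * μ) *
        (deriv (fun b =>
          deriv (fun b' =>
            ((b' / (ε + κ * |x| ^ m)) ^ 2 - 1/4) * (1 - μ / (l + 2 * μ)) * κ * (m / 2) *
              x ^ (m - 1)) b) y) +
      (l + μ) *
        (deriv (fun a =>
          deriv (fun b => (2 * b + (ε + κ * |a| ^ m)) / (2 * (ε + κ * |a| ^ m))) y) x) = 0 := by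
  have hδpos : ∀ a : ℝ, 0 < ε + κ * |a| ^ m := by
    intro a
    have : (0:ℝ) ≤ κ * |a| ^ m := mul_nonneg hκ.le (Real.rpow_nonneg (abs_nonneg a) m)
    linarith
  set δ := ε + κ * |x| ^ m with hδdef
  have hδ : δ ≠ 0 := (hδpos x).ne'
  set A : ℝ := (1 - μ / (l + 2 * μ)) * κ * (m / 2) * x ^ (m - 1) with hA
  -- First term
  have h1 : (fun b : ℝ => deriv (fun b' =>
      ((b' / δ) ^ 2 - 1/4) * (1 - μ / (l + 2 * μ)) * κ * (m / 2) * x ^ (m - 1)) b)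
      = fun b : ℝ => (A / δ ^ 2 * 2) * b := by
    funext b
    have heq : (fun b' : ℝ => ((b' / δ) ^ 2 - 1/4) * (1 - μ / (l + 2 * μ)) * κ * (m / 2) *
        x ^ (m - 1)) = fun b' : ℝ => (A / δ ^ 2) * b' ^ 2 - A / 4 := by
      funext b'
      field_simp
      ring
    rw [heq]
    have h := (((hasDerivAt_pow 2 b).const_mul (A / δ ^ 2)).sub_const (A / 4)).deriv
    rw [h]; ring
  rw [h1]
  have hd1 : deriv (fun b : ℝ => (A / δ ^ 2 * 2) * b) y = A / δ ^ 2 * 2 := by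
    have := ((hasDerivAt_id y).const_mul (A / δ ^ 2 * 2)).deriv
    simpa using this
  rw [hd1]
  -- Second term
  have h2 : (fun a : ℝ => deriv
      (fun b => (2 * b + (ε + κ * |a| ^ m)) / (2 * (ε + κ * |a| ^ m))) y)
      = fun a : ℝ => (ε + κ * |a| ^ m)⁻¹ := by
    funext a
    have hδa : (ε + κ * |a| ^ m) ≠ 0 := (hδpos a).ne'
    have heq : (fun b : ℝ => (2 * b + (ε + κ * |a| ^ m)) / (2 * (ε + κ * |a| ^ m)))
        = fun b : ℝ => (ε + κ * |a| ^ m)⁻¹ * b + 1 / 2 := by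
      funext b
      field_simp
    rw [heq]
    have := (((hasDerivAt_id y).const_mul ((ε + κ * |a| ^ m)⁻¹)).add_const (1/2)).deriv
    simpa using this
  rw [h2]
  have habs : HasDerivAt (fun a : ℝ => |a| ^ m) (m * x ^ (m - 1)) x := by
    have h := Real.hasDerivAt_rpow_const (x := x) (p := m) (Or.inl hx.ne')
    apply h.congr_of_eventuallyEq
    filter_upwards [eventually_gt_nhds hx] with a ha
    rw [abs_of_pos ha]
  have hδx : HasDerivAt (fun a : ℝ => ε + κ * |a| ^ m) (κ * (m * x ^ (m - 1))) x :=
    (habs.const_mul κ).const_add ε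
  have hinv : HasDerivAt (fun a : ℝ => (ε + κ * |a| ^ m)⁻¹)
      (-(κ * (m * x ^ (m - 1))) / δ ^ 2) x := hδx.inv hδ
  rw [hinv.deriv]
  -- final algebra
  have hl2μ : l + 2 * μ ≠ 0 := by nlinarith
  rw [hA]
  field_simp
  ring
end

section
/- Let m > 2, δ(x₁) = ε + κ₀|x₁|^m, μ > 0, λ+μ > 0, and for x₁ > 0 set ū₁⁽¹⁾ = (2x₂+δ)/(2δ), ũ₁⁽¹⁾ = ((x₂/δ)²−1/4)(2−μ/(λ+2μ))(κ₀/3)(m(m−1)/2)x₂x₁^{m−2}, ũ₁⁽²⁾ = ((x₂/δ)²−1/4)(1−μ/(λ+2μ))(mκ₀/2)x₁^{m−1}. With R₁₁ := 2m²κ₀² x₁^{2m−2}x₂/δ³ and R₁₂ := −2m²κ₀²(λ+μ)/(λ+2μ) · x₁^{2m−2}x₂/δ³, the identity (λ+2μ)(∂_{x₁x₁}ū₁⁽¹⁾ − R₁₁) + μ∂_{x₂x₂}ũ₁⁽¹⁾ + (λ+μ)(∂_{x₁x₂}ũ₁⁽²⁾ − R₁₂) = 0 holds, where ∂_{x₁x₁}ū₁⁽¹⁾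 = −m(m−1)κ₀x₁^{m−2}x₂/δ² + R₁₁, ∂_{x₂x₂}ũ₁⁽¹⁾ = m(m−1)κ₀(2λ+3μ)/(λ+2μ)·x₁^{m−2}x₂/δ², ∂_{x₁x₂}ũ₁⁽²⁾ = m(m−1)κ₀(λ+μ)/(λ+2μ)·x₁^{m−2}x₂/δ² + R₁₂. -/
/-!
Away from `x = 0` everything is explicit calculus in `δ(a) = ε + κ|a|^m`. The first term is
`y/δ + 1/2`, whose second derivative is `2yδ'²/δ³ - yδ''/δ²`; the second is a cubic in `y`;
the third is `y² u(a) + v(a)` with `u = c a^(m-1)/δ²`, so its mixed derivative is `2y u'`. The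
`x^(2m-2) y/δ³` parts of the first and third terms are exactly `R₁₁` and `R₁₂`, and the
coefficients of `m(m-1)κ x^(m-2) y/δ²` add up to
`-(l+2μ) + μ(2 - μ/(l+2μ)) + (l+μ)²/(l+2μ) = 0`.
-/

open Real Filter Topology

theorem deriv_deriv_eq_of_hasDerivAt {f f' : ℝ → ℝ} {x f'' : ℝ}
    (hf : ∀ᶠ t in 𝓝 x, HasDerivAt f (f' t) t) (hf' : HasDerivAt f' f'' x) :
    deriv (deriv f) x = f'' := by
  rw [EventuallyEq.deriv_eq (hf.mono fun t ht => ht.deriv), hf'.deriv]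

theorem deriv_deriv_two_mul_add_div {D D₁ : ℝ → ℝ} {x D₂ : ℝ}
    (y : ℝ) (hD : ∀ t, D t ≠ 0) (hD₁ : ∀ᶠ t in 𝓝 x, HasDerivAt D (D₁ t) t)
    (hD₂ : HasDerivAt D₁ D₂ x) :
    deriv (deriv fun a => (2 * y + D a) / (2 * D a)) x
      = 2 * y * D₁ x ^ 2 / D x ^ 3 - y * D₂ / D x ^ 2 := by
  refine deriv_deriv_eq_of_hasDerivAt (f' := fun t => -(y * D₁ t) / D t ^ 2) ?_ ?_
  · filter_upwards [hD₁] with t ht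
    refine ((ht.const_add (2 * y)).div (ht.const_mul 2)
      (mul_ne_zero two_ne_zero (hD t))).congr_deriv ?_
    field_simp [hD t]
    ring
  · refine ((hD₂.const_mul y).neg.div (hD₁.self_of_nhds.pow 2)
      (pow_ne_zero 2 (hD x))).congr_deriv ?_
    simp only [Pi.pow_apply, Pi.neg_apply]
    field_simp [hD x]
    ring

theorem deriv_deriv_of_cubic {f : ℝ → ℝ} (α β y : ℝ)
    (hf : ∀ b, f b = α * b ^ 3 + β * b) :
    deriv (deriv f) y = 6 * α * y := by
  obtain rfl : f = fun b => α * b ^ 3 + β * b := funext hf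
  refine deriv_deriv_eq_of_hasDerivAt (f' := fun b => 3 * α * b ^ 2 + β)
    (Eventually.of_forall fun b => ?_) ?_
  · refine (((hasDerivAt_pow 3 b).const_mul α).add
      ((hasDerivAt_id b).const_mul β)).congr_deriv ?_
    push_cast
    ring
  · refine (((hasDerivAt_pow 2 y).const_mul (3 * α)).add_const β).congr_deriv ?_
    push_cast
    ring

theorem deriv_deriv_mixed_of_quadratic {g : ℝ → ℝ → ℝ} {u v : ℝ → ℝ} {x u' : ℝ}
    (y : ℝ) (hg : ∀ a b, g a b = b ^ 2 * u a + v a) (hu : HasDerivAt u u' x)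
    (hv : DifferentiableAt ℝ v x) :
    deriv (fun b => deriv (fun a => g a b) x) y = 2 * y * u' := by
  have h : ∀ b, deriv (fun a => g a b) x = b ^ 2 * u' + deriv v x := fun b => by
    simp only [hg]
    exact ((hu.const_mul (b ^ 2)).add hv.hasDerivAt).deriv
  simp only [h]
  rw [(((hasDerivAt_pow 2 y).mul_const u').add_const (deriv v x)).deriv]
  push_cast
  ring

theorem hasDerivAt_abs_rpow_of_pos {p x : ℝ} (hx : 0 < x) :
    HasDerivAt (fun t => |t| ^ p) (p * x ^ (p - 1)) x :=
  (hasDerivAt_rpow_const (Or.inl hx.ne')).congr_of_eventuallyEq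
    ((eventually_gt_nhds hx).mono fun t ht => by simp only [abs_of_pos ht])

theorem hasDerivAt_rpow_sub_one (p : ℝ) {x : ℝ} (hx : 0 < x) :
    HasDerivAt (fun t => t ^ (p - 1)) ((p - 1) * x ^ (p - 2)) x := by
  refine (hasDerivAt_rpow_const (Or.inl hx.ne')).congr_deriv ?_
  ring_nf

theorem rpow_sub_one_eq_mul {p x : ℝ} (hx : 0 < x) : x ^ (p - 1) = x ^ (p - 2) * x := by
  rw [← rpow_add_one hx.ne']
  ring_nf

theorem stmt_13_general (m ε κ l μ : ℝ) (hε : 0 < ε) (hκ : 0 < κ)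
    (hμ : 0 < μ) (hlμ : 0 < l + μ) (x y : ℝ) (hx : 0 < x) :
    (l + 2 * μ) *
        ((deriv (fun a =>
            deriv (fun a' => (2 * y + (ε + κ * |a'| ^ m)) / (2 * (ε + κ * |a'| ^ m))) a) x) -
          2 * m ^ 2 * κ ^ 2 * x ^ (2 * m - 2) * y / (ε + κ * |x| ^ m) ^ 3) +
      μ *
        (deriv (fun b =>
          deriv (fun b' =>
            ((b' / (ε + κ * |x| ^ m)) ^ 2 - 1/4) * (2 - μ / (l + 2 * μ)) * (κ / 3) *
              (m * (m - 1) / 2) * b' * x ^ (m - 2)) b) y) +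
      (l + μ) *
        ((deriv (fun b =>
            deriv (fun a =>
              ((b / (ε + κ * |a| ^ m)) ^ 2 - 1/4) * (1 - μ / (l + 2 * μ)) * (m * κ / 2) *
                a ^ (m - 1)) x) y) -
          (-(2 * m ^ 2 * κ ^ 2 * (l + μ) / (l + 2 * μ)) * x ^ (2 * m - 2) * y /
            (ε + κ * |x| ^ m) ^ 3)) = 0 := by
  have hD : ∀ t, ε + κ * |t| ^ m ≠ 0 := fun t => by positivity
  have hD₁ : ∀ᶠ t in 𝓝 x,
      HasDerivAt (fun t => ε + κ * |t| ^ m) (κ * (m * t ^ (m - 1))) t :=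
    (eventually_gt_nhds hx).mono fun t ht =>
      ((hasDerivAt_abs_rpow_of_pos ht).const_mul κ).const_add ε
  have hD₂ := ((hasDerivAt_rpow_sub_one m hx).const_mul m).const_mul κ
  set c := (1 - μ / (l + 2 * μ)) * (m * κ / 2)
  have hu := ((hasDerivAt_rpow_sub_one m hx).const_mul c).div (hD₁.self_of_nhds.pow 2)
    (pow_ne_zero 2 (hD x))
  have hv := (((hasDerivAt_rpow_sub_one m hx).const_mul c).div_const 4).neg.differentiableAt
  rw [deriv_deriv_two_mul_add_div y hD hD₁ hD₂, deriv_deriv_mixed_of_quadratic y _ hu hv,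
    abs_of_pos hx, deriv_deriv_of_cubic
      ((2 - μ / (l + 2 * μ)) * (κ / 3) * (m * (m - 1) / 2) * x ^ (m - 2) / (ε + κ * x ^ m) ^ 2)
      (-((2 - μ / (l + 2 * μ)) * (κ / 3) * (m * (m - 1) / 2) * x ^ (m - 2)) / 4)]
  · have hlμ₂ : l + 2 * μ ≠ 0 := by linarith
    simp only [Pi.pow_apply, abs_of_pos hx, c]
    rw [show 2 * m - 2 = (m - 1) + (m - 1) by ring, rpow_add hx, rpow_sub_one_eq_mul hx]
    field_simp
    ring
  · intro b
    rw [div_pow]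
    ring
  · intro a b
    simp only [Pi.div_apply, Pi.pow_apply, Pi.neg_apply, div_pow, c]
    ring

theorem stmt_13 (m ε κ l μ : ℝ) (hm : 2 < m) (hε : 0 < ε) (hκ : 0 < κ)
    (hμ : 0 < μ) (hlμ : 0 < l + μ) (x y : ℝ) (hx : 0 < x) :
    (l + 2 * μ) *
        ((deriv (fun a =>
            deriv (fun a' => (2 * y + (ε + κ * |a'| ^ m)) / (2 * (ε + κ * |a'| ^ m))) a) x) -
          2 * m ^ 2 * κ ^ 2 * x ^ (2 * m - 2) * y / (ε + κ * |x| ^ m) ^ 3) +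
      μ *
        (deriv (fun b =>
          deriv (fun b' =>
            ((b' / (ε + κ * |x| ^ m)) ^ 2 - 1/4) * (2 - μ / (l + 2 * μ)) * (κ / 3) *
              (m * (m - 1) / 2) * b' * x ^ (m - 2)) b) y) +
      (l + μ) *
        ((deriv (fun b =>
            deriv (fun a =>
              ((b / (ε + κ * |a| ^ m)) ^ 2 - 1/4) * (1 - μ / (l + 2 * μ)) * (m * κ / 2) *
                a ^ (m - 1)) x) y) -
          (-(2 * m ^ 2 * κ ^ 2 * (l + μ) / (l + 2 * μ)) * x ^ (2 * m - 2) * y /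
            (ε + κ * |x| ^ m) ^ 3)) = 0 :=
  stmt_13_general m ε κ l μ hε hκ hμ hlμ x y hx
end
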